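/- Suppose for a slice: (i) value density bound v ≤ U·T·Σ_{m} y_m^t for each slot t, (ii) variation bound Σ_m y_m^t ≤ V·y_{m'}^t whenever y_{m'}^t > 0, and (iii) T ≤ K. If resource m' has reached full capacity so its price is φ(C_{m'}) = σUVK (with σ ≥ 1), and the slice uses y_{m'}^t > 0 at some slot t, then the scaled estimated cost satisfies (1/σ)·y_{m'}^t·φ(C_{m'}) ≥ v. Consequently the slice would be rejected by the price-based admission rule. -/

import Mathlib

/-- If resource m' is at full capacity, so its price is φ(C_{m'}) = σUVK,
and the slice uses y_{m'} > 0 at some slot, then under the value-density,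
variation and stay-duration bounds, the scaled estimated cost satisfies
(1/σ)·y_{m'}·σUVK ≥ v, so the slice is rejected by the price-based rule. -/
theorem stmt_5 (M : ℕ) (y : Fin M → ℝ) (hy : ∀ m, 0 ≤ y m)
    (m' : Fin M) (hym' : 0 < y m')
    (v L U V K T σ : ℝ) (hL : 0 < L) (hLU : L ≤ U) (hV : 1 ≤ V)
    (hT : 1 ≤ T) (hTK : T ≤ K) (hσ : 1 ≤ σ)
    (hdens : v ≤ U * T * ∑ m, y m)
    (hvar : ∑ m, y m ≤ V * y m') :
    v ≤ (1 / σ) * (y m' * (σ * U * V * K)) := by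
  have hσ0 : σ ≠ 0 := by linarith
  have hU : 0 < U := lt_of_lt_of_le hL hLU
  have h1 : v ≤ U * T * (V * y m') := by
    calc v ≤ U * T * ∑ m, y m := hdens
    _ ≤ U * T * (V * y m') := by
        apply mul_le_mul_of_nonneg_left hvar
        positivity
  have h2 : U * T * (V * y m') ≤ U * K * (V * y m') := by
    apply mul_le_mul_of_nonneg_right _ (by positivity)
    nlinarith
  have : (1 / σ) * (y m' * (σ * U * V * K)) = U * K * (V * y m') := by
    field_simp
  linarith
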